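/- arXiv:2110.04566 — 2 statements merged into one kernel-verified Lean document; each statement's English description precedes it below -/
import Mathlib

section
/- For each j ∈ {1,2,3} and all F, G ∈ L²(ℝ³; ℂ), the function (t, ξ) ↦ t · ξ_j⁴ |ξ|⁴ e^{−t|ξ|⁴} F(ξ) · conj(G(ξ)) is integrable on (0,∞) × ℝ³, and ∫₀^∞ t ( ∫_{ℝ³} ξ_j⁴ |ξ|⁴ e^{−t|ξ|⁴} F(ξ) conj(G(ξ)) dξ ) dt = ∫_{ℝ³} (ξ_j⁴/|ξ|⁴) F(ξ) conj(G(ξ)) dξ. (Taking F = 𝓕f and G = 𝓕g, this is the representation ⟨𝓡_j⁴ f, g⟩_{L²} = −∫₀^∞ ⟨∂_{x_j}⁴ (d/dt) P_t f, g⟩ t dt of the fourth power of the Riesz transform 𝓡_j in terms of the semigroup P_t = e^{−tΔ²} associated to the parabolic biharmonic equation ∂_t w + Δ² w = 0.) -/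
/-!
Since `∫₀^∞ t e^{-ta} dt = 1/a²`, for `ξ ≠ 0` the `t`-integral of the kernel
`t ξ_j⁴ |ξ|⁴ e^{-t|ξ|⁴}` is `ξ_j⁴/|ξ|⁴ ≤ 1`. As `F · conj G ∈ L¹` (Hölder), Tonelli gives
integrability on `(0,∞) × ℝ³`, and Fubini lets us integrate in `t` first.
-/

open MeasureTheory Set

section KernelFubini

variable {α β E : Type*} [MeasurableSpace α] [MeasurableSpace β] {μ : Measure α} {ν : Measure β}
  [SFinite μ] [SFinite ν] [NormedAddCommGroup E] [NormedSpace ℝ E]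
  {k : α × β → ℝ} {H : β → E}

theorem integrable_prod_smul_of_integral_norm_le {C : ℝ}
    (hk : AEStronglyMeasurable k (μ.prod ν))
    (hk_int : ∀ᵐ y ∂ν, Integrable (fun x => k (x, y)) μ)
    (hk_le : ∀ᵐ y ∂ν, ∫ x, ‖k (x, y)‖ ∂μ ≤ C) (hH : Integrable H ν) :
    Integrable (fun p => k p • H p.2) (μ.prod ν) := by
  have hmeas : AEStronglyMeasurable (fun p => k p • H p.2) (μ.prod ν) :=
    hk.smul hH.1.comp_snd
  refine (integrable_prod_iff' hmeas).2 ⟨?_, ?_⟩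
  · filter_upwards [hk_int] with y hy using hy.smul_const (H y)
  · refine (hH.norm.const_mul C).mono' hmeas.prod_swap.norm.integral_prod_right' ?_
    filter_upwards [hk_le] with y hy
    simp only [norm_smul, integral_mul_const]
    rw [Real.norm_of_nonneg (by positivity)]
    exact mul_le_mul_of_nonneg_right hy (norm_nonneg _)

theorem integral_integral_smul_swap [CompleteSpace E]
    (hf : Integrable (fun p => k p • H p.2) (μ.prod ν)) :
    ∫ x, ∫ y, k (x, y) • H y ∂ν ∂μ = ∫ y, (∫ x, k (x, y) ∂μ) • H y ∂ν := by
  rw [integral_integral_swap (f := fun x y => k (x, y) • H y) hf]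
  simp only [integral_smul_const]

end KernelFubini

theorem integrableOn_Ioi_mul_exp_neg_mul {a : ℝ} (ha : 0 < a) :
    IntegrableOn (fun t : ℝ => t * Real.exp (-(t * a))) (Ioi 0) := by
  simpa [mul_comm] using
    integrableOn_rpow_mul_exp_neg_mul_rpow (s := 1) (p := 1) (by norm_num) one_pos ha

theorem integral_Ioi_mul_exp_neg_mul {a : ℝ} (ha : 0 < a) :
    ∫ t in Ioi 0, t * Real.exp (-(t * a)) = 1 / a ^ 2 := by
  have h := Real.integral_rpow_mul_exp_neg_mul_Ioi two_pos ha
  norm_num [Real.Gamma_two] at h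
  simpa [mul_comm] using h

theorem EuclideanSpace.pow_four_apply_le {ι : Type*} [Fintype ι] (ξ : EuclideanSpace ℝ ι)
    (i : ι) :
    ξ i ^ 4 ≤ ‖ξ‖ ^ 4 := by
  rw [← (by decide : Even 4).pow_abs]
  exact pow_le_pow_left₀ (abs_nonneg _) (PiLp.norm_apply_le ξ i) 4

theorem integrableOn_Ioi_mul_mul_mul_exp_neg {a : ℝ} (ha : 0 < a) (c : ℝ) :
    IntegrableOn (fun t : ℝ => t * c * a * Real.exp (-(t * a))) (Ioi 0) :=
  IntegrableOn.congr_fun ((integrableOn_Ioi_mul_exp_neg_mul ha).const_mul (c * a))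
    (fun t _ => by ring) measurableSet_Ioi

theorem integral_Ioi_mul_mul_mul_exp_neg {a : ℝ} (ha : 0 < a) (c : ℝ) :
    ∫ t in Ioi 0, t * c * a * Real.exp (-(t * a)) = c / a := by
  calc ∫ t in Ioi 0, t * c * a * Real.exp (-(t * a))
      = c * a * ∫ t in Ioi 0, t * Real.exp (-(t * a)) := by
        rw [← integral_const_mul]; congr 1; ext t; ring
    _ = c / a := by rw [integral_Ioi_mul_exp_neg_mul ha]; field_simp

/-- Representation of the fourth power of the Riesz transform via the semigroup
`P_t = e^{−tΔ²}` of the parabolic biharmonic equation: for `F, G ∈ L²(ℝ³)`,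
the function `(t,ξ) ↦ t ξ_j⁴ |ξ|⁴ e^{−t|ξ|⁴} F(ξ) conj(G(ξ))` is integrable on
`(0,∞) × ℝ³` and its iterated integral equals `∫ (ξ_j⁴/|ξ|⁴) F conj(G)`. -/
theorem riesz_fourth_power_biharmonic_representation
    (j : Fin 3) (F G : EuclideanSpace ℝ (Fin 3) → ℂ)
    (hF : MemLp F 2 volume) (hG : MemLp G 2 volume) :
    Integrable
      (fun p : ℝ × EuclideanSpace ℝ (Fin 3) =>
        ((p.1 * (p.2 j) ^ 4 * ‖p.2‖ ^ 4 * Real.exp (-(p.1 * ‖p.2‖ ^ 4)) : ℝ) : ℂ) *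
          (F p.2 * (starRingEnd ℂ) (G p.2)))
      ((volume.restrict (Set.Ioi (0 : ℝ))).prod volume) ∧
    ∫ t in Set.Ioi (0 : ℝ),
        (t : ℂ) * ∫ ξ, (((ξ j) ^ 4 * ‖ξ‖ ^ 4 * Real.exp (-(t * ‖ξ‖ ^ 4)) : ℝ) : ℂ) *
          (F ξ * (starRingEnd ℂ) (G ξ)) =
      ∫ ξ, (((ξ j) ^ 4 / ‖ξ‖ ^ 4 : ℝ) : ℂ) * (F ξ * (starRingEnd ℂ) (G ξ)) := by
  set k : ℝ × EuclideanSpace ℝ (Fin 3) → ℝ :=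
    fun p => p.1 * p.2 j ^ 4 * ‖p.2‖ ^ 4 * Real.exp (-(p.1 * ‖p.2‖ ^ 4))
  set H : EuclideanSpace ℝ (Fin 3) → ℂ := fun ξ => F ξ * (starRingEnd ℂ) (G ξ)
  have hH : Integrable H := hF.integrable_mul hG.star
  have hξ : ∀ᵐ ξ : EuclideanSpace ℝ (Fin 3), 0 < ‖ξ‖ ^ 4 := by
    filter_upwards [(Set.countable_singleton 0).ae_notMem volume] with ξ hξ
    exact pow_pos (norm_pos_iff.2 hξ) 4
  have hk_int : ∀ᵐ ξ, IntegrableOn (fun t => k (t, ξ)) (Ioi 0) := by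
    filter_upwards [hξ] with ξ hξ using integrableOn_Ioi_mul_mul_mul_exp_neg hξ (ξ j ^ 4)
  have hk_eq : ∀ᵐ ξ, ∫ t in Ioi 0, k (t, ξ) = ξ j ^ 4 / ‖ξ‖ ^ 4 := by
    filter_upwards [hξ] with ξ hξ using integral_Ioi_mul_mul_mul_exp_neg hξ (ξ j ^ 4)
  have hk_le : ∀ᵐ ξ, ∫ t in Ioi 0, ‖k (t, ξ)‖ ≤ 1 := by
    filter_upwards [hξ, hk_eq] with ξ hξ hξ_eq
    rw [setIntegral_congr_fun measurableSet_Ioi fun t (ht : 0 < t) =>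
      Real.norm_of_nonneg (by positivity), hξ_eq, div_le_one hξ]
    exact EuclideanSpace.pow_four_apply_le ξ j
  have hint : Integrable (fun p => k p • H p.2) ((volume.restrict (Ioi 0)).prod volume) :=
    integrable_prod_smul_of_integral_norm_le (by fun_prop) hk_int hk_le hH
  simp only [← Complex.real_smul]
  refine ⟨hint, ?_⟩
  calc ∫ t in Ioi 0, t • ∫ ξ, (ξ j ^ 4 * ‖ξ‖ ^ 4 * Real.exp (-(t * ‖ξ‖ ^ 4))) • H ξ
      = ∫ t in Ioi 0, ∫ ξ, k (t, ξ) • H ξ := by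
        refine integral_congr_ae (ae_of_all _ fun t => ?_)
        simp only [← integral_smul, smul_smul, k, mul_assoc]
    _ = ∫ ξ, (∫ t in Ioi 0, k (t, ξ)) • H ξ := integral_integral_smul_swap hint
    _ = ∫ ξ, (ξ j ^ 4 / ‖ξ‖ ^ 4) • H ξ := by
        refine integral_congr_ae ?_
        filter_upwards [hk_eq] with ξ hξ_eq
        rw [hξ_eq]
end

section
/- There exist an integer N ≥ 1, real polynomials q̃₁,…,q̃_N and q₁,…,q_N, all with nonnegative coefficients and with each q_k nonzero of degree at least 1, and a constant C > 0, such that for every c > 0 and every x = (x₁,x₂,x₃) ∈ ℝ³ with (x₁,x₂) ≠ (0,0), the fourth derivative at s = x₃ of the function s ↦ sin(c·√(x₁² + x₂² + s²))/√(x₁² + x₂² + s²) satisfies |∂⁴_s [sin(c√(x₁²+x₂²+s²))/√(x₁²+x₂²+s²)]|_{s=x₃}| ≤ C · Σ_{k=1}^N q̃_k(c)/q_k(|x|), where |x| = √(x₁² + x₂² + x₃²). -/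
/-!
With `r = √(a + t²)` and `a = x₁² + x₂² > 0`, every derivative in `t` of `sin (c r) / r` is a
finite sum of terms `κ cʲ tᵐ sin (c r + φ) / r^(m + e)`: differentiating such a term produces
three terms of the same shape in which the weight `j + e` has grown by one and `e ≥ 1` is kept.
Since `|t| ≤ r`, each term is at most `|κ| cʲ / rᵉ`, so the `n`-th derivative is bounded by a
constant, independent of `a`, `c` and `t`, times `∑_{j ≤ n} cʲ / r^(n + 1 - j)`.
-/

noncomputable section

open Real

structure KernelTerm where
  coeff : ℝ
  cpow : ℕ
  tpow : ℕ
  decay : ℕ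
  phase : ℝ

abbrev KernelSum := List KernelTerm

namespace KernelTerm

def eval (τ : KernelTerm) (a c t : ℝ) : ℝ :=
  τ.coeff * c ^ τ.cpow * t ^ τ.tpow * sin (c * √(a + t ^ 2) + τ.phase) /
    √(a + t ^ 2) ^ (τ.tpow + τ.decay)

/-- The phase absorbs `cos x = sin (x + π / 2)`; for `tpow = 0` the first term has coefficient
`0`, so the truncated `tpow - 1` does no harm. -/
def differentiate (τ : KernelTerm) : KernelSum :=
  [⟨τ.coeff * τ.tpow, τ.cpow, τ.tpow - 1, τ.decay + 1, τ.phase⟩,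
   ⟨τ.coeff, τ.cpow + 1, τ.tpow + 1, τ.decay, τ.phase + π / 2⟩,
   ⟨-τ.coeff * (τ.tpow + τ.decay), τ.cpow, τ.tpow + 1, τ.decay + 1, τ.phase⟩]

def HasWeight (w : ℕ) (τ : KernelTerm) : Prop :=
  τ.cpow + τ.decay = w ∧ 1 ≤ τ.decay

end KernelTerm

namespace KernelSum

def eval (L : KernelSum) (a c t : ℝ) : ℝ :=
  (L.map fun τ => τ.eval a c t).sum

def differentiate (L : KernelSum) : KernelSum :=
  L.flatMap KernelTerm.differentiate

lemma eval_cons (τ : KernelTerm) (L : KernelSum) (a c : ℝ) :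
    eval (τ :: L) a c = τ.eval a c + L.eval a c := rfl

def coeffNorm (L : KernelSum) : ℝ :=
  (L.map fun τ => |τ.coeff|).sum

lemma coeffNorm_nonneg (L : KernelSum) : 0 ≤ L.coeffNorm :=
  List.sum_nonneg (by simp)

end KernelSum

section Derivatives

variable {a t : ℝ}

lemma hasDerivAt_sqrt_add_sq (h : 0 < a + t ^ 2) :
    HasDerivAt (fun s => √(a + s ^ 2)) (t / √(a + t ^ 2)) t := by
  have hq : HasDerivAt (fun s => a + s ^ 2) (2 * t) t := by
    simpa using (hasDerivAt_pow 2 t).const_add a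
  refine (hq.sqrt h.ne').congr_deriv ?_
  field_simp

lemma hasDerivAt_sqrt_add_sq_pow (h : 0 < a + t ^ 2) (n : ℕ) :
    HasDerivAt (fun s => √(a + s ^ 2) ^ n)
      (n * t * √(a + t ^ 2) ^ n / √(a + t ^ 2) ^ 2) t := by
  have hr0 : √(a + t ^ 2) ≠ 0 := (Real.sqrt_pos.2 h).ne'
  refine ((hasDerivAt_sqrt_add_sq h).pow n).congr_deriv ?_
  rcases n with _ | n
  · simp
  · simp only [Nat.add_sub_cancel]
    field_simp
    ring

lemma KernelTerm.hasDerivAt_eval (τ : KernelTerm) (c : ℝ) (h : 0 < a + t ^ 2) :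
    HasDerivAt (τ.eval a c) (KernelSum.eval τ.differentiate a c t) t := by
  have hr := hasDerivAt_sqrt_add_sq h
  have hr0 : √(a + t ^ 2) ≠ 0 := (Real.sqrt_pos.2 h).ne'
  have H : HasDerivAt (τ.eval a c) _ t :=
    (((hasDerivAt_pow τ.tpow t).const_mul (τ.coeff * c ^ τ.cpow)).mul
      ((hr.const_mul c).add_const τ.phase).sin).div
      (hasDerivAt_sqrt_add_sq_pow h (τ.tpow + τ.decay)) (pow_ne_zero _ hr0)
  refine H.congr_deriv ?_
  obtain ⟨k, j, m, e, φ⟩ := τ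
  simp only [differentiate, KernelSum.eval, eval, List.map_cons, List.map_nil, List.sum_cons,
    List.sum_nil, ← add_assoc, sin_add_pi_div_two, Pi.mul_apply]
  rcases m with _ | m
  · simp only [Nat.cast_zero, zero_add, Nat.zero_sub, zero_mul, mul_zero]
    field_simp
    ring
  · simp only [Nat.add_sub_cancel]
    field_simp
    push_cast
    ring

lemma KernelSum.hasDerivAt_eval (L : KernelSum) (c : ℝ) (h : 0 < a + t ^ 2) :
    HasDerivAt (L.eval a c) (L.differentiate.eval a c t) t := by
  induction L with
  | nil => exact hasDerivAt_const t 0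
  | cons τ L ih =>
    rw [eval_cons]
    simpa [eval, differentiate] using (τ.hasDerivAt_eval c h).add ih

lemma KernelSum.iteratedDeriv_eval (L : KernelSum) (c : ℝ) (ha : 0 < a) (n : ℕ) :
    iteratedDeriv n (L.eval a c) = (differentiate^[n] L).eval a c := by
  induction n generalizing L with
  | zero => rfl
  | succ n ih =>
    have hderiv : deriv (L.eval a c) = L.differentiate.eval a c :=
      funext fun t => (L.hasDerivAt_eval c (by positivity)).deriv
    rw [iteratedDeriv_succ', hderiv, ih, Function.iterate_succ_apply]

end Derivatives

section Bounds

variable {a c t : ℝ}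

lemma KernelTerm.HasWeight.differentiate {w : ℕ} {τ : KernelTerm} (hτ : τ.HasWeight w) :
    ∀ σ ∈ τ.differentiate, σ.HasWeight (w + 1) := by
  obtain ⟨hw, he⟩ := hτ
  simp only [KernelTerm.differentiate, List.mem_cons, List.not_mem_nil, or_false]
  rintro σ (rfl | rfl | rfl) <;> constructor <;> dsimp only <;> omega

lemma KernelSum.hasWeight_differentiate {w : ℕ} {L : KernelSum}
    (hL : ∀ τ ∈ L, τ.HasWeight w) : ∀ σ ∈ L.differentiate, σ.HasWeight (w + 1) := by
  simp only [differentiate, List.mem_flatMap]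
  rintro σ ⟨τ, hτ, hσ⟩
  exact (hL τ hτ).differentiate σ hσ

lemma KernelSum.hasWeight_iterate_differentiate {w : ℕ} {L : KernelSum}
    (hL : ∀ τ ∈ L, τ.HasWeight w) (n : ℕ) :
    ∀ σ ∈ differentiate^[n] L, σ.HasWeight (w + n) := by
  induction n with
  | zero => exact hL
  | succ n ih =>
    rw [Function.iterate_succ_apply']
    exact hasWeight_differentiate ih

lemma KernelTerm.abs_eval_le (τ : KernelTerm) (ha : 0 ≤ a) (hc : 0 ≤ c) (h : 0 < a + t ^ 2) :
    |τ.eval a c t| ≤ |τ.coeff| * c ^ τ.cpow / √(a + t ^ 2) ^ τ.decay := by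
  have hr : 0 < √(a + t ^ 2) := Real.sqrt_pos.2 h
  have ht : |t| ≤ √(a + t ^ 2) := by
    rw [← Real.sqrt_sq_eq_abs]
    exact Real.sqrt_le_sqrt (by linarith)
  calc |τ.eval a c t|
      = |τ.coeff| * c ^ τ.cpow * |t| ^ τ.tpow * |sin (c * √(a + t ^ 2) + τ.phase)| /
          √(a + t ^ 2) ^ (τ.tpow + τ.decay) := by
        simp only [eval, abs_div, abs_mul, abs_pow, abs_of_nonneg hc, abs_of_pos hr]
    _ ≤ |τ.coeff| * c ^ τ.cpow * √(a + t ^ 2) ^ τ.tpow * 1 /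
          √(a + t ^ 2) ^ (τ.tpow + τ.decay) := by
        gcongr
        exact abs_sin_le_one _
    _ = |τ.coeff| * c ^ τ.cpow / √(a + t ^ 2) ^ τ.decay := by
        rw [pow_add]
        field_simp

lemma KernelTerm.HasWeight.abs_eval_le {w : ℕ} {τ : KernelTerm} (hτ : τ.HasWeight w)
    (ha : 0 ≤ a) (hc : 0 ≤ c) (h : 0 < a + t ^ 2) :
    |τ.eval a c t| ≤ |τ.coeff| * ∑ k : Fin w, c ^ (k : ℕ) / √(a + t ^ 2) ^ (w - k) := by
  obtain ⟨hw, he⟩ := hτ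
  have hk : τ.cpow < w := by omega
  have hsingle : c ^ τ.cpow / √(a + t ^ 2) ^ τ.decay ≤
      ∑ k : Fin w, c ^ (k : ℕ) / √(a + t ^ 2) ^ (w - k) := by
    have := Finset.single_le_sum (f := fun k : Fin w => c ^ (k : ℕ) / √(a + t ^ 2) ^ (w - k))
      (fun k _ => by positivity) (Finset.mem_univ ⟨τ.cpow, hk⟩)
    simpa [← hw] using this
  calc |τ.eval a c t|
      ≤ |τ.coeff| * c ^ τ.cpow / √(a + t ^ 2) ^ τ.decay := τ.abs_eval_le ha hc h
    _ ≤ _ := by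
      rw [mul_div_assoc]
      exact mul_le_mul_of_nonneg_left hsingle (abs_nonneg _)

lemma KernelSum.abs_eval_le {w : ℕ} {L : KernelSum} (hL : ∀ τ ∈ L, τ.HasWeight w)
    (ha : 0 ≤ a) (hc : 0 ≤ c) (h : 0 < a + t ^ 2) :
    |L.eval a c t| ≤ L.coeffNorm * ∑ k : Fin w, c ^ (k : ℕ) / √(a + t ^ 2) ^ (w - k) := by
  induction L with
  | nil => simp [eval, coeffNorm]
  | cons τ L ih =>
    simp only [List.mem_cons, forall_eq_or_imp] at hL
    simp only [eval, coeffNorm, List.map_cons, List.sum_cons, add_mul] at ih ⊢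
    exact (abs_add_le _ _).trans (add_le_add (hL.1.abs_eval_le ha hc h) (ih hL.2))

end Bounds

theorem exists_abs_iteratedDeriv_sin_mul_sqrt_div_sqrt_le (n : ℕ) :
    ∃ K : ℝ, 0 < K ∧ ∀ a c t : ℝ, 0 < a → 0 ≤ c →
      |iteratedDeriv n (fun s => sin (c * √(a + s ^ 2)) / √(a + s ^ 2)) t| ≤
        K * ∑ k : Fin (n + 1), c ^ (k : ℕ) / √(a + t ^ 2) ^ (n + 1 - k) := by
  let kernel : KernelSum := [⟨1, 0, 0, 1, 0⟩]
  have hkernel : ∀ τ ∈ kernel, τ.HasWeight 1 := by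
    simp [kernel, KernelTerm.HasWeight]
  refine ⟨(KernelSum.differentiate^[n] kernel).coeffNorm + 1,
    by linarith [KernelSum.coeffNorm_nonneg (KernelSum.differentiate^[n] kernel)],
    fun a c t ha hc => ?_⟩
  have hf : (fun s => sin (c * √(a + s ^ 2)) / √(a + s ^ 2)) = kernel.eval a c := by
    funext s
    simp [kernel, KernelSum.eval, KernelTerm.eval]
  rw [hf, kernel.iteratedDeriv_eval c ha, add_comm n]
  refine (KernelSum.abs_eval_le (KernelSum.hasWeight_iterate_differentiate hkernel n) ha.le hc
    (by positivity)).trans ?_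
  gcongr
  linarith

/-- Pointwise bound, uniform in `c > 0`, for the fourth derivative in `x₃` of
`sin(c√(x₁²+x₂²+x₃²))/√(x₁²+x₂²+x₃²)`, in terms of finitely many quotients
`q̃_k(c)/q_k(|x|)` of polynomials with nonnegative coefficients, each `q_k`
nonzero of degree at least one. -/
theorem fourth_derivative_sine_kernel_bound :
    ∃ N : ℕ, 1 ≤ N ∧ ∃ qt q : Fin N → Polynomial ℝ,
      (∀ k : Fin N, ∀ n : ℕ, 0 ≤ (qt k).coeff n ∧ 0 ≤ (q k).coeff n) ∧
      (∀ k : Fin N, q k ≠ 0 ∧ 1 ≤ (q k).natDegree) ∧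
      ∃ C : ℝ, 0 < C ∧
        ∀ c : ℝ, 0 < c → ∀ x₁ x₂ x₃ : ℝ, ¬(x₁ = 0 ∧ x₂ = 0) →
          |iteratedDeriv 4
              (fun s : ℝ => Real.sin (c * Real.sqrt (x₁ ^ 2 + x₂ ^ 2 + s ^ 2)) /
                Real.sqrt (x₁ ^ 2 + x₂ ^ 2 + s ^ 2)) x₃| ≤
            C * ∑ k : Fin N,
              (qt k).eval c / (q k).eval (Real.sqrt (x₁ ^ 2 + x₂ ^ 2 + x₃ ^ 2)) := by
  obtain ⟨K, hK, hbound⟩ := exists_abs_iteratedDeriv_sin_mul_sqrt_div_sqrt_le 4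
  have coeff_X_pow_nonneg (m n : ℕ) : 0 ≤ (Polynomial.X ^ m : Polynomial ℝ).coeff n := by
    rw [Polynomial.coeff_X_pow]
    split_ifs <;> norm_num
  refine ⟨5, by norm_num,
    fun k => Polynomial.X ^ (k : ℕ), fun k => Polynomial.X ^ (5 - k : ℕ),
    fun k n => ⟨coeff_X_pow_nonneg _ _, coeff_X_pow_nonneg _ _⟩,
    fun k => ⟨pow_ne_zero _ Polynomial.X_ne_zero, by rw [Polynomial.natDegree_X_pow]; omega⟩,
    K, hK, ?_⟩
  intro c hc x₁ x₂ x₃ hx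
  have ha : 0 < x₁ ^ 2 + x₂ ^ 2 := by
    rcases not_and_or.mp hx with h | h <;> positivity
  simpa only [Polynomial.eval_pow, Polynomial.eval_X] using hbound _ c x₃ ha hc.le

end
end
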